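/- arXiv:1605.00560 — 4 statements merged into one kernel-verified Lean document; each statement's English description precedes it below -/
import Mathlib

section
/- Let G be a topological group, g ∈ G, and let H be the closure of the cyclic subgroup generated by g. Let H⁰ be the connected component of the identity in H, and suppose H/H⁰ is a finite group of order ℓ in which the image of g has order ℓ. Then the closure of the cyclic subgroup generated by g^ℓ equals H⁰. -/
/-!
The image of `g` generates the finite cyclic group `H/H⁰` with order `ℓ`, so the powers of `g`
lying in `H⁰` are exactly the powers of `g^ℓ`. Since `H⁰` is closed of finite index it is open,
and the trace on an open subgroup of the dense subgroup generated by `g` is dense in it.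
-/

open Subgroup

namespace Subgroup

variable {G : Type*} [Group G]

theorem zpowers_inf_eq_zpowers_pow_orderOf (N : Subgroup G) [N.Normal] (x : G) :
    zpowers x ⊓ N = zpowers (x ^ orderOf (x : G ⧸ N)) := by
  apply le_antisymm
  · rintro _ ⟨⟨k, rfl⟩, hk⟩
    have hdvd : (orderOf (x : G ⧸ N) : ℤ) ∣ k := by
      rw [orderOf_dvd_iff_zpow_eq_one, ← QuotientGroup.mk_zpow, QuotientGroup.eq_one_iff]
      exact hk
    obtain ⟨m, rfl⟩ := hdvd
    exact ⟨m, by simp only [zpow_mul, zpow_natCast]⟩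
  · rw [zpowers_le]
    refine ⟨pow_mem (mem_zpowers x) _, (QuotientGroup.eq_one_iff _).mp ?_⟩
    rw [QuotientGroup.mk_pow]
    exact pow_orderOf_eq_one _

variable [TopologicalSpace G] [IsTopologicalGroup G]

theorem topologicalClosure_inf_eq_of_dense_of_isOpen {S N : Subgroup G}
    (hS : Dense (S : Set G)) (hN : IsOpen (N : Set G)) : (S ⊓ N).topologicalClosure = N := by
  refine le_antisymm (topologicalClosure_minimal _ inf_le_right (N.isClosed_of_isOpen hN)) ?_
  rw [inf_comm]
  exact hS.open_subset_closure_inter hN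

theorem dense_zpowers_of_eq_topologicalClosure {g : G} {H : Subgroup G}
    (hH : H = (zpowers g).topologicalClosure) {x : H} (hx : (x : G) = g) :
    Dense (zpowers x : Set H) := by
  have himage : Subtype.val '' (zpowers x : Set H) = zpowers g := by
    rw [← hx]
    exact congrArg SetLike.coe (MonoidHom.map_zpowers H.subtype x)
  refine Subtype.dense_iff.mpr (le_of_eq ?_)
  calc (H : Set G) = _root_.closure (zpowers g : Set G) := by rw [hH, topologicalClosure_coe]
    _ = _root_.closure (Subtype.val '' (zpowers x : Set H)) := by rw [himage]

end Subgroup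

theorem closure_zpowers_pow_eq_identityComponent_general
    {G : Type*} [Group G] [TopologicalSpace G] [IsTopologicalGroup G] (g : G) (ℓ : ℕ)
    (H : Subgroup G) (hH : H = (Subgroup.zpowers g).topologicalClosure)
    (g' : H) (hg' : (g' : G) = g)
    [hn : (Subgroup.connectedComponentOfOne H).Normal]
    (hfin : Finite (H ⧸ Subgroup.connectedComponentOfOne H))
    (hord : orderOf (QuotientGroup.mk g' : H ⧸ Subgroup.connectedComponentOfOne H) = ℓ) :
    (Subgroup.zpowers (g' ^ ℓ)).topologicalClosure
      = Subgroup.connectedComponentOfOne H := by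
  have : (connectedComponentOfOne H).FiniteIndex := finiteIndex_of_finite_quotient
  have hopen : IsOpen (connectedComponentOfOne H : Set H) :=
    isOpen_of_isClosed_of_finiteIndex _ isClosed_connectedComponent
  rw [← hord, ← zpowers_inf_eq_zpowers_pow_orderOf]
  exact topologicalClosure_inf_eq_of_dense_of_isOpen
    (dense_zpowers_of_eq_topologicalClosure hH hg') hopen

/-- If `H` is the closure of the cyclic subgroup generated by `g`, `H⁰` the identity
component of `H`, and the component group `H/H⁰` has order `ℓ` with the image of `g`
of order `ℓ`, then the closure of the subgroup generated by `g^ℓ` equals `H⁰`. -/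
theorem closure_zpowers_pow_eq_identityComponent
    {G : Type*} [Group G] [TopologicalSpace G] [IsTopologicalGroup G] (g : G) (ℓ : ℕ)
    (H : Subgroup G) (hH : H = (Subgroup.zpowers g).topologicalClosure)
    (g' : H) (hg' : (g' : G) = g)
    [hn : (Subgroup.connectedComponentOfOne H).Normal]
    (hfin : Finite (H ⧸ Subgroup.connectedComponentOfOne H))
    (hcard : Nat.card (H ⧸ Subgroup.connectedComponentOfOne H) = ℓ)
    (hord : orderOf (QuotientGroup.mk g' : H ⧸ Subgroup.connectedComponentOfOne H) = ℓ) :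
    (Subgroup.zpowers (g' ^ ℓ)).topologicalClosure
      = Subgroup.connectedComponentOfOne H :=
  closure_zpowers_pow_eq_identityComponent_general g ℓ H hH g' hg' (hn := hn) hfin hord
end

section
/- Let p be a prime, m ≥ 2 an integer, and R an associative (not necessarily commutative) ring in which p^m · 1 = 0. Let a ∈ R be such that for every x ∈ R, the commutator [a, x] = ax - xa lies in p^{m-1}R. Then a^p is central in R. -/
/-- In a ring with `p^m = 0` (`m ≥ 2`), if `a` is central modulo `p^{m-1}R`,
then `a^p` is central. -/
theorem pow_p_central_of_central_mod_p_pow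
    (p : ℕ) (hp : p.Prime) (m : ℕ) (hm : 2 ≤ m)
    (R : Type*) [Ring R] (hchar : ((p : R)) ^ m = 0)
    (a : R) (ha : ∀ x : R, ∃ y : R, a * x - x * a = ((p : R)) ^ (m - 1) * y) :
    ∀ x : R, a ^ p * x = x * a ^ p := by
  intro x
  set c : R := ((p : R)) ^ (m - 1) with hc
  have hcen : ∀ z : R, c * z = z * c := fun z =>
    ((Nat.cast_commute p z).pow_left (m - 1)).eq
  have hpc : (p : R) * c = 0 := by
    calc (p : R) * c = (p : R) ^ 1 * (p : R) ^ (m - 1) := by rw [pow_one]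
    _ = (p : R) ^ (1 + (m - 1)) := (pow_add _ _ _).symm
    _ = 0 := by rw [show 1 + (m - 1) = m by omega, hchar]
  have hcc : c * c = 0 := by
    calc c * c = (p : R) ^ ((m - 1) + (m - 1)) := (pow_add _ _ _).symm
    _ = (p : R) ^ m * (p : R) ^ (m - 2) := by rw [← pow_add]; congr 1; omega
    _ = 0 := by rw [hchar, zero_mul]
  obtain ⟨y, hy⟩ := ha x
  obtain ⟨y', hy'⟩ := ha y
  have hay : a * y = y * a + c * y' := by rw [eq_add_of_sub_eq hy', add_comm]
  have key : a * (c * y) = c * y * a := by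
    calc a * (c * y) = (a * c) * y := (mul_assoc _ _ _).symm
    _ = (c * a) * y := by rw [hcen a]
    _ = c * (a * y) := mul_assoc _ _ _
    _ = c * (y * a) + (c * c) * y' := by rw [hay, mul_add, mul_assoc]
    _ = c * y * a := by rw [hcc, zero_mul, add_zero, mul_assoc]
  have hax : a * x = x * a + c * y := by rw [eq_add_of_sub_eq hy, add_comm]
  have main : ∀ n : ℕ, a ^ (n + 1) * x = x * a ^ (n + 1) + (n + 1) • (c * y * a ^ n) := by
    intro n
    induction n with
    | zero => simpa using hax
    | succ n ih =>
      calc a ^ (n + 2) * x = a * (a ^ (n + 1) * x) := by rw [← mul_assoc, ← pow_succ']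
      _ = a * (x * a ^ (n + 1)) + (n + 1) • (a * (c * y * a ^ n)) := by
          rw [ih, mul_add, mul_smul_comm]
      _ = (a * x) * a ^ (n + 1) + (n + 1) • (c * y * a ^ (n + 1)) := by
          rw [← mul_assoc, ← mul_assoc a (c * y), key, mul_assoc (c * y), ← pow_succ']
      _ = x * a ^ (n + 2) + (c * y * a ^ (n + 1) + (n + 1) • (c * y * a ^ (n + 1))) := by
          rw [hax, add_mul, mul_assoc x a, ← pow_succ', add_assoc]
      _ = x * a ^ (n + 2) + (n + 2) • (c * y * a ^ (n + 1)) := by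
          rw [← succ_nsmul']
  have hp1 : p - 1 + 1 = p := Nat.succ_pred_eq_of_pos hp.pos
  have hmain := main (p - 1)
  rw [hp1] at hmain
  rw [hmain, nsmul_eq_mul, ← mul_assoc, ← mul_assoc, hpc, zero_mul, zero_mul, add_zero]
end

section
/- Let L be a field of characteristic p > 0 that is perfect and finitely generated as a field extension of 𝔽_p. Then L is a finite field. -/
/-!
If `L` had a transcendence basis `s ≠ ∅` over `𝔽_p`, then `L` would be finite over
`A = 𝔽_p(s)`. Frobenius is an automorphism of `L` mapping `A` into itself, and it preserves
`[L : A]`, so it maps `A` onto `A`: every element of `A`, in particular every `t ∈ s`, has a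
`p`-th root in `A`. But `A` is the fraction field of the factorial ring `𝔽_p[s]`, in which the
prime `t` is not a `p`-th power.
-/

open IntermediateField

theorem IsFractionRing.algebraMap_ne_pow_of_irreducible {R K : Type*} [CommRing R] [IsDomain R]
    [IsIntegrallyClosed R] [Field K] [Algebra R K] [IsFractionRing R K] {r : R}
    (hr : Irreducible r) {n : ℕ} (hn : 1 < n) (y : K) : y ^ n ≠ algebraMap R K r := by
  intro hy
  have hint : IsIntegral R y :=
    IsIntegral.of_pow (by omega) (hy ▸ isIntegral_algebraMap)
  obtain ⟨z, rfl⟩ := IsIntegrallyClosed.isIntegral_iff.mp hint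
  rw [← map_pow, (IsFractionRing.injective R K).eq_iff] at hy
  exact not_irreducible_pow hn.ne' (hy ▸ hr)

theorem AlgebraicIndependent.pow_ne_of_mem_adjoin {ι K L : Type*} [Field K] [Field L]
    [Algebra K L] {x : ι → L} (hx : AlgebraicIndependent K x) {n : ℕ} (hn : 1 < n) (i : ι)
    {b : L} (hb : b ∈ adjoin K (Set.range x)) : b ^ n ≠ x i := by
  intro hbi
  apply IsFractionRing.algebraMap_ne_pow_of_irreducible
    (MvPolynomial.X_prime (R := K) (i := i)).irreducible hn (hx.aevalEquivField.symm ⟨b, hb⟩)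
  apply hx.aevalEquivField.injective
  ext
  simp [hbi]

theorem IntermediateField.map_eq_self_of_map_le {F L : Type*} [Field F] [Field L] [Algebra F L]
    (σ : L ≃ₐ[F] L) (A : IntermediateField F L) [FiniteDimensional A L]
    (h : A.map (σ : L →ₐ[F] L) ≤ A) : A.map (σ : L →ₐ[F] L) = A := by
  have hfinrank : Module.finrank (A.map (σ : L →ₐ[F] L)) L = Module.finrank A L := by
    rw [← relfinrank_top_right, ← relfinrank_top_right, ← relfinrank_map_map A ⊤ σ.toAlgHom,
      ← AlgHom.fieldRange_eq_map, σ.fieldRange_eq_top]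
  have hmul : relfinrank (A.map (σ : L →ₐ[F] L)) A * Module.finrank A L = Module.finrank A L :=
    hfinrank ▸ relfinrank_mul_finrank_top h
  rw [mul_eq_right₀ Module.finrank_pos.ne', relfinrank_eq_one_iff] at hmul
  exact le_antisymm h hmul

theorem IntermediateField.exists_pow_card_eq_of_finiteDimensional {K L : Type*} [Field K]
    [Fintype K] [Field L] [Algebra K L] (p : ℕ) [ExpChar L p] [PerfectRing L p]
    (A : IntermediateField K L) [FiniteDimensional A L] {a : L} (ha : a ∈ A) :
    ∃ b ∈ A, b ^ Fintype.card K = a := by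
  let σ := FiniteField.frobeniusAlgEquiv K L p
  have hle : A.map (σ : L →ₐ[K] L) ≤ A := by
    rintro _ ⟨x, hx, rfl⟩
    exact pow_mem hx _
  rw [← A.map_eq_self_of_map_le σ hle] at ha
  obtain ⟨b, hb, rfl⟩ := ha
  exact ⟨b, hb, rfl⟩

theorem Algebra.isAlgebraic_of_perfectRing_of_essFiniteType (K L : Type*) [Field K] [Fintype K]
    [Field L] [Algebra K L] (p : ℕ) [ExpChar L p] [PerfectRing L p] [Algebra.EssFiniteType K L] :
    Algebra.IsAlgebraic K L := by
  obtain ⟨s, hs⟩ := exists_isTranscendenceBasis K L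
  rcases isEmpty_or_nonempty s with h | ⟨⟨i⟩⟩
  · exact hs.isEmpty_iff_isAlgebraic.mp h
  exfalso
  let A := IntermediateField.adjoin K (Set.range ((↑) : s → L))
  have : Algebra.IsAlgebraic A L := hs.isAlgebraic_field
  have : Algebra.EssFiniteType A L := .of_comp K A L
  have : Module.Finite A L := Algebra.finite_of_essFiniteType_of_isAlgebraic
  obtain ⟨b, hb, hbi⟩ := A.exists_pow_card_eq_of_finiteDimensional p
    (IntermediateField.subset_adjoin _ _ ⟨i, rfl⟩)
  exact hs.1.pow_ne_of_mem_adjoin Fintype.one_lt_card i hb hbi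

theorem finite_of_perfect_and_fg_general (p : ℕ) [Fact p.Prime]
    (L : Type*) [Field L] [Algebra (ZMod p) L] [ExpChar L p]
    [PerfectRing L p]
    (hfg : ∃ s : Finset L, IntermediateField.adjoin (ZMod p) (s : Set L) = ⊤) :
    Finite L := by
  have : Algebra.EssFiniteType (ZMod p) L := fg_top_iff.mp hfg
  have := Algebra.isAlgebraic_of_perfectRing_of_essFiniteType (ZMod p) L p
  have : Module.Finite (ZMod p) L := Algebra.finite_of_essFiniteType_of_isAlgebraic
  exact Module.finite_of_finite (ZMod p)

/-- A perfect field of characteristic `p` that is finitely generated as a field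
extension of `𝔽_p` is finite. -/
theorem finite_of_perfect_and_fg (p : ℕ) [Fact p.Prime]
    (L : Type*) [Field L] [Algebra (ZMod p) L] [CharP L p] [ExpChar L p]
    [PerfectRing L p]
    (hfg : ∃ s : Finset L, IntermediateField.adjoin (ZMod p) (s : Set L) = ⊤) :
    Finite L :=
  finite_of_perfect_and_fg_general p L hfg
end

section
/- Let F be a field and B a finitely generated associative F-algebra which is an Ore domain, such that the division ring of fractions D = Frac(B) is finite-dimensional over its center Z. Then Z is a finitely generated field extension of F. -/
/-!
Over the centre `Z`, left multiplication by `b ∈ D` is `Z`-linear, so a `Z`-basis of `D`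
represents `D` faithfully by matrices over `Z`. The entries of the matrices of the finitely many
generators of `B` generate over `F` a field `K` containing the entries of every matrix of `B`.
A central `z = c⁻¹ b` with `b, c ∈ B` satisfies `M(b) = z • M(c)` and `M(c) ≠ 0`, so `z` is the
ratio of two such entries and lies in `K`.
-/

open Algebra

section leftMulMatrix

variable {R S ι : Type*} [Ring S] [Fintype ι] [DecidableEq ι]

theorem Algebra.exists_eq_leftMulMatrix_div [Field R] [Algebra R S] (w : Module.Basis ι R S)
    {c : S} (hc : c ≠ 0) (z : R) :
    ∃ i j, z = leftMulMatrix w (algebraMap R S z * c) i j / leftMulMatrix w c i j := by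
  have hM : leftMulMatrix w c ≠ 0 :=
    fun h ↦ hc (leftMulMatrix_injective w (h.trans (map_zero _).symm))
  obtain ⟨i, j, hij⟩ : ∃ i j, leftMulMatrix w c i j ≠ 0 := by
    by_contra! h
    exact hM (Matrix.ext h)
  refine ⟨i, j, ?_⟩
  rw [map_mul, AlgHom.commutes, ← Algebra.smul_def, Matrix.smul_apply, smul_eq_mul,
    mul_div_cancel_right₀ _ hij]

variable [CommRing R] [Algebra R S] (w : Module.Basis ι R S)

theorem Algebra.leftMulMatrix_map_mem_matrix_of_mem_closure {T : Set S} {K : Subring S}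
    (hT : ∀ x ∈ T, (leftMulMatrix w x).map (algebraMap R S) ∈ K.matrix) {x : S}
    (hx : x ∈ Subring.closure T) : (leftMulMatrix w x).map (algebraMap R S) ∈ K.matrix := by
  let φ : S →+* Matrix ι ι S := (algebraMap R S).mapMatrix.comp (leftMulMatrix w).toRingHom
  exact (Subring.closure_le (t := K.matrix.comap φ)).2 hT hx

theorem Algebra.leftMulMatrix_algebraMap_map_mem_matrix {K : Subring S} {r : R}
    (hr : algebraMap R S r ∈ K) :
    (leftMulMatrix w (algebraMap R S r)).map (algebraMap R S) ∈ K.matrix := by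
  intro i j
  rw [AlgHom.commutes, Matrix.map_apply, Matrix.algebraMap_matrix_apply]
  split_ifs
  · simpa using hr
  · simp [K.zero_mem]

end leftMulMatrix

theorem Algebra.leftMulMatrix_map_mem_matrix_of_mem_adjoin {F S ι : Type*} [CommRing F] [Ring S]
    [Algebra F S] [Fintype ι] [DecidableEq ι] (w : Module.Basis ι (Subring.center S) S)
    {t : Set S} {K : Subring S} (hF : Set.range (algebraMap F S) ⊆ K)
    (ht : ∀ x ∈ t, (leftMulMatrix w x).map (algebraMap _ S) ∈ K.matrix) {x : S}
    (hx : x ∈ adjoin F t) : (leftMulMatrix w x).map (algebraMap _ S) ∈ K.matrix := by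
  refine leftMulMatrix_map_mem_matrix_of_mem_closure w ?_ (mem_adjoin_iff.1 hx)
  rintro y (⟨r, rfl⟩ | hy)
  · exact leftMulMatrix_algebraMap_map_mem_matrix w (r := ⟨_, Set.algebraMap_mem_center r⟩)
      (hF ⟨r, rfl⟩)
  · exact ht y hy

/-- Let `B` be a finitely generated `F`-subalgebra of a division ring `D` which is
the ring of fractions of `B` (every element of `D` is `c⁻¹ * b` with `b, c ∈ B`,
`c ≠ 0`), and suppose `D` is finite dimensional over its center `Z`.  Then `Z` is a
finitely generated field extension of `F`. -/
theorem center_fg_of_fraction_division_ring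
    (F : Type*) [Field F] (D : Type*) [DivisionRing D] [Algebra F D]
    (B : Subalgebra F D)
    (hBfg : ∃ t : Finset D, Algebra.adjoin F (t : Set D) = B)
    (hfrac : ∀ d : D, ∃ b c : D, b ∈ B ∧ c ∈ B ∧ c ≠ 0 ∧ d = c⁻¹ * b)
    (N : ℕ) (v : Fin N → D)
    (hbasis : ∀ d : D, ∃ c : Fin N → D,
        (∀ i, c i ∈ Subring.center D) ∧ d = ∑ i, c i * v i) :
    ∃ s : Finset D, (s : Set D) ⊆ Subring.center D ∧
      ∀ z ∈ Subring.center D,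
        z ∈ Subfield.closure (Set.range (algebraMap F D) ∪ (s : Set D)) := by
  classical
  obtain ⟨t, rfl⟩ := hBfg
  let Z := Subring.center D
  have : Module.Finite Z D := by
    refine .of_surjective (Fintype.linearCombination Z v) fun d ↦ ?_
    obtain ⟨c, hc, rfl⟩ := hbasis d
    exact ⟨fun i ↦ ⟨c i, hc i⟩, Fintype.linearCombination_apply Z v _⟩
  let w := Module.finBasis Z D
  let s : Finset D := (t ×ˢ Finset.univ ×ˢ Finset.univ).image
    fun p ↦ (leftMulMatrix w p.1 p.2.1 p.2.2 : D)
  refine ⟨s, ?_, fun z hz ↦ ?_⟩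
  · simp only [s, Finset.coe_image, Set.image_subset_iff]
    exact fun p _ ↦ (leftMulMatrix w _ _ _).2
  set K := Subfield.closure (Set.range (algebraMap F D) ∪ (s : Set D))
  have hB : ∀ b ∈ adjoin F (t : Set D),
      (leftMulMatrix w b).map (algebraMap Z D) ∈ K.toSubring.matrix := by
    refine fun b ↦ leftMulMatrix_map_mem_matrix_of_mem_adjoin w
      (fun _ hy ↦ Subfield.subset_closure (.inl hy)) fun x hx i j ↦ ?_
    have hs : ((leftMulMatrix w x i j : Z) : D) ∈ s :=
      Finset.mem_image.2 ⟨(x, i, j), Finset.mem_product.2 ⟨hx, by simp⟩, rfl⟩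
    exact Subfield.subset_closure (.inr hs)
  obtain ⟨b, c, hb, hc, hc0, hzbc⟩ := hfrac z
  have hbzc : algebraMap Z D ⟨z, hz⟩ * c = b := by
    change z * c = b
    rw [← Subring.mem_center_iff.1 hz c, hzbc, ← mul_assoc, mul_inv_cancel₀ hc0, one_mul]
  obtain ⟨i, j, hij⟩ := exists_eq_leftMulMatrix_div w hc0 ⟨z, hz⟩
  rw [hbzc] at hij
  rw [show z = algebraMap Z D ⟨z, hz⟩ from rfl, hij, map_div₀]
  exact K.div_mem (hB b hb i j) (hB c hc i j)
end
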